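/- Let n be a positive integer. The involution on subsets of {1,...,n} given by toggling membership of the element 1 restricts to a bijection between subsets of even cardinality and subsets of odd cardinality, and it preserves the quantity 2·(∑_{a=1}^{p}(κ_a − a)) − p(1−p), where κ_1 < κ_2 < ... < κ_p are the elements of the subset listed in increasing order and p is its cardinality. -/

import Mathlib

open Finset

/-- The weight `w(κ) = 2·∑_{a=1}^{p}(κ_a − a) − p(1−p)` of a finite set of naturals,
where `κ_1 < ... < κ_p` are its elements and `p = |κ|`.  Since the `κ_a` are just the
elements of `κ`, the first sum is `(∑ x ∈ κ, x) − ∑_{a=1}^{p} a`. -/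
noncomputable def stmtWeight (κ : Finset ℕ) : ℤ :=
  2 * ((∑ x ∈ κ, (x : ℤ)) - ∑ a ∈ Finset.range κ.card, ((a : ℤ) + 1))
    - (κ.card : ℤ) * (1 - (κ.card : ℤ))

/-- Toggle membership of the element `1`. -/
def toggleOne (κ : Finset ℕ) : Finset ℕ :=
  if 1 ∈ κ then κ.erase 1 else insert 1 κ

lemma range_sum_succ (p : ℕ) :
    2 * ∑ a ∈ Finset.range p, ((a : ℤ) + 1) = p * (p + 1) := by
  induction p with
  | zero => simp
  | succ k ih => rw [Finset.sum_range_succ]; push_cast; ring_nf; push_cast at ih; ring_nf at ih; linarith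

lemma stmtWeight_eq (κ : Finset ℕ) :
    stmtWeight κ = 2 * (∑ x ∈ κ, (x : ℤ)) - 2 * κ.card := by
  unfold stmtWeight
  have := range_sum_succ κ.card
  linarith

theorem stmt_0 (n : ℕ) (hn : 1 ≤ n) (κ : Finset ℕ) (hκ : κ ⊆ Finset.Icc 1 n) :
    toggleOne κ ⊆ Finset.Icc 1 n ∧
    toggleOne (toggleOne κ) = κ ∧
    (Even (toggleOne κ).card ↔ Odd κ.card) ∧
    stmtWeight (toggleOne κ) = stmtWeight κ := by
  have h1 : (1 : ℕ) ∈ Finset.Icc 1 n := by simp [hn]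
  unfold toggleOne
  by_cases h : 1 ∈ κ
  · simp only [h, if_true]
    have hne : 1 ∉ κ.erase 1 := Finset.notMem_erase 1 κ
    refine ⟨(Finset.erase_subset 1 κ).trans hκ, ?_, ?_, ?_⟩
    · simp [hne, Finset.insert_erase h]
    · rw [Finset.card_erase_of_mem h]
      rcases Nat.exists_eq_succ_of_ne_zero (Finset.card_ne_zero_of_mem h) with ⟨k, hk⟩
      rw [hk]
      simp [Nat.even_add_one, Nat.odd_add_one, parity_simps]
    · rw [stmtWeight_eq, stmtWeight_eq, Finset.sum_erase_eq_sub h,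
        Finset.card_erase_of_mem h]
      have : 1 ≤ κ.card := Finset.card_pos.mpr ⟨1, h⟩
      push_cast [this]
      ring
  · simp only [h, if_false]
    have hmem : 1 ∈ insert 1 κ := Finset.mem_insert_self 1 κ
    refine ⟨Finset.insert_subset h1 hκ, ?_, ?_, ?_⟩
    · simp [hmem, Finset.erase_insert h]
    · rw [Finset.card_insert_of_notMem h]
      simp [Nat.even_add_one, Nat.odd_add_one, parity_simps]
    · rw [stmtWeight_eq, stmtWeight_eq, Finset.sum_insert h,
        Finset.card_insert_of_notMem h]
      push_cast
      ring
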